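/- Let A and B be finite types and let φ₀, φ₁ : A × B → ℂ be unit vectors, with reduced states ρ₀ = ptrA φ₀ and ρ₁ = ptrA φ₁. Then there exists a unit vector φ : A × B → ℂ with ptrA φ = ρ₀ such that |⟨φ, φ₁⟩| = F(ρ₀, ρ₁). (Uhlmann's theorem in purification form: the fidelity of the two reduced states is attained as the overlap of φ₁ with some purification of ρ₀.) -/

import Mathlib

open scoped ComplexOrder
open Matrix

noncomputable section

/-- Partial trace over `A` of the outer product `|ψ⟩⟨ψ|`:
`(ptrA ψ) j q = ∑ i, ψ (i, j) * conj (ψ (i, q))`. -/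
def ptrA {A B : Type*} [Fintype A] (ψ : A × B → ℂ) : Matrix B B ℂ :=
  fun j q => ∑ i : A, ψ (i, j) * (starRingEnd ℂ) (ψ (i, q))

/-- The Kronecker product `S ⊗ I` with the identity on `B`, as a matrix on `A × B`. -/
def kronId {A B : Type*} [DecidableEq B] (S : Matrix A A ℂ) : Matrix (A × B) (A × B) ℂ :=
  Matrix.kroneckerMap (· * ·) S (1 : Matrix B B ℂ)

/-- `ptrA ψ` is a Gram matrix, hence positive semidefinite. -/
lemma ptrA_posSemidef {A B : Type*} [Fintype A] [Fintype B] (ψ : A × B → ℂ) :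
    (ptrA ψ).PosSemidef := by
  set V : Matrix A B ℂ := Matrix.of fun i j => (starRingEnd ℂ) (ψ (i, j)) with hV
  have h := Matrix.posSemidef_conjTranspose_mul_self V
  have heq : ptrA ψ = Vᴴ * V := by
    ext j q
    simp [Matrix.mul_apply, Matrix.conjTranspose_apply, ptrA, hV, mul_comm]
  rw [heq]; exact h

namespace Matrix.PosSemidef

/-- The positive semidefinite square root of a positive semidefinite matrix
(the definition of Mathlib of December 2024, which has since been removed). -/
noncomputable def sqrt {n 𝕜 : Type*} [Fintype n] [DecidableEq n] [RCLike 𝕜] {A : Matrix n n 𝕜}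
    (hA : A.PosSemidef) : Matrix n n 𝕜 :=
  hA.1.eigenvectorUnitary.1 * diagonal ((↑) ∘ Real.sqrt ∘ hA.1.eigenvalues) *
  (star hA.1.eigenvectorUnitary : Matrix n n 𝕜)

lemma posSemidef_sqrt {n 𝕜 : Type*} [Fintype n] [DecidableEq n] [RCLike 𝕜] {A : Matrix n n 𝕜}
    (hA : A.PosSemidef) : hA.sqrt.PosSemidef := by
  have hd : (0 : n → 𝕜) ≤ ((↑) ∘ Real.sqrt ∘ hA.1.eigenvalues : n → 𝕜) :=
    fun i => RCLike.ofReal_nonneg.mpr (Real.sqrt_nonneg _)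
  exact (PosSemidef.diagonal hd).mul_mul_conjTranspose_same (hA.1.eigenvectorUnitary : Matrix n n 𝕜)

end Matrix.PosSemidef

lemma sqrt_mul_mul_sqrt_posSemidef {B : Type*} [Fintype B] [DecidableEq B]
    {ρ σ : Matrix B B ℂ} (hρ : ρ.PosSemidef) (hσ : σ.PosSemidef) :
    (hρ.sqrt * σ * hρ.sqrt).PosSemidef := by
  have h := hσ.mul_mul_conjTranspose_same hρ.sqrt
  rwa [hρ.posSemidef_sqrt.isHermitian.eq] at h

/-- The fidelity `F(ρ, σ) = tr √(√ρ * σ * √ρ)` of two positive semidefinite matrices. -/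
def fidelity {B : Type*} [Fintype B] [DecidableEq B] {ρ σ : Matrix B B ℂ}
    (hρ : ρ.PosSemidef) (hσ : σ.PosSemidef) : ℝ :=
  ((sqrt_mul_mul_sqrt_posSemidef hρ hσ).sqrt.trace).re

/-!
Write a bipartite vector `ψ` as the matrix `M_ψ` with entries `ψ (i, j)`, so that
`ptrA ψ = M_ψ M_ψᴴ` and `⟨ψ, ψ'⟩ = tr (M_ψᴴ M_ψ')`. For every unitary `U`, `M₀ U` is again a
purification of `ρ₀ = M₀ M₀ᴴ`, with overlap `tr (Uᴴ Z)` against `φ₁`, where `Z = M₀ᴴ M₁`.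
Choosing `U` from the polar decomposition `Z = U |Z|` makes this overlap `tr |Z|`. Finally
`|Z|² = M₁ᴴ ρ₀ M₁ = Xᴴ X` for `X = √ρ₀ M₁`, while `√ρ₀ ρ₁ √ρ₀ = X Xᴴ`; since `X Xᴴ` and `Xᴴ X`
have the same nonzero eigenvalues with multiplicity, `tr |Z| = F(ρ₀, ρ₁)`.
-/

open scoped InnerProductSpace MatrixOrder

namespace ContinuousLinearMap

variable {𝕜 E : Type*} [RCLike 𝕜] [NormedAddCommGroup E] [InnerProductSpace 𝕜 E]
  [CompleteSpace E]

lemma norm_apply_eq_of_star_mul_self_eq {a b : E →L[𝕜] E} (h : star a * a = star b * b)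
    (v : E) : ‖a v‖ = ‖b v‖ := by
  have hsq : ‖a v‖ ^ 2 = ‖b v‖ ^ 2 := by
    rw [apply_norm_sq_eq_inner_adjoint_left, apply_norm_sq_eq_inner_adjoint_left]
    exact congrArg (fun c : E →L[𝕜] E => RCLike.re ⟪c v, v⟫_𝕜) h
  exact (sq_eq_sq₀ (norm_nonneg _) (norm_nonneg _)).mp hsq

-- `b v ↦ a v` is a well-defined isometry on the range of `b`; extend it to all of `E`.
theorem exists_mem_unitary_eq_mul_of_star_mul_self_eq [FiniteDimensional 𝕜 E]
    {a b : E →L[𝕜] E} (h : star a * a = star b * b) :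
    ∃ u ∈ unitary (E →L[𝕜] E), a = u * b := by
  have hnorm := norm_apply_eq_of_star_mul_self_eq h
  have hker : LinearMap.ker (b : E →ₗ[𝕜] E) ≤ LinearMap.ker (a : E →ₗ[𝕜] E) := fun v hv => by
    simpa [← norm_eq_zero, hnorm] using hv
  let l : LinearMap.range (b : E →ₗ[𝕜] E) →ₗ[𝕜] E :=
    (LinearMap.ker (b : E →ₗ[𝕜] E)).liftQ a hker ∘ₗ (b : E →ₗ[𝕜] E).quotKerEquivRange.symm
  have hl : ∀ v, l ⟨b v, LinearMap.mem_range_self _ v⟩ = a v := fun v => by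
    simp only [l, LinearMap.comp_apply, LinearEquiv.coe_coe]
    exact congrArg _ (LinearMap.quotKerEquivRange_symm_apply_image (b : E →ₗ[𝕜] E) v _)
  let L : LinearMap.range (b : E →ₗ[𝕜] E) →ₗᵢ[𝕜] E :=
    { l with
      norm_map' := by
        rintro ⟨_, v, rfl⟩
        simpa [hl] using hnorm v }
  refine ⟨Unitary.linearIsometryEquiv.symm (L.extend.toLinearIsometryEquiv rfl),
    SetLike.coe_mem _, ?_⟩
  ext v
  exact ((L.extend_apply ⟨b v, LinearMap.mem_range_self _ v⟩).trans (hl v)).symm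

end ContinuousLinearMap

namespace Matrix

variable {𝕜 m n : Type*} [RCLike 𝕜] [Fintype m] [Fintype n] [DecidableEq m] [DecidableEq n]

theorem exists_mem_unitaryGroup_eq_mul_of_conjTranspose_mul_self_eq {X Y : Matrix n n 𝕜}
    (h : Xᴴ * X = Yᴴ * Y) : ∃ U ∈ unitaryGroup n 𝕜, X = U * Y := by
  let e : Matrix n n 𝕜 ≃⋆ₐ[𝕜] (EuclideanSpace 𝕜 n →L[𝕜] EuclideanSpace 𝕜 n) := toEuclideanCLM
  obtain ⟨u, hu, hXY⟩ :
      ∃ u ∈ unitary (EuclideanSpace 𝕜 n →L[𝕜] EuclideanSpace 𝕜 n), e X = u * e Y :=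
    ContinuousLinearMap.exists_mem_unitary_eq_mul_of_star_mul_self_eq <| by
      simp only [← map_star, ← map_mul, star_eq_conjTranspose, h]
  refine ⟨e.symm u, Unitary.map_mem e.symm hu, ?_⟩
  rw [← e.symm_apply_apply X, hXY, map_mul, e.symm_apply_apply]

theorem exists_mem_unitaryGroup_eq_mul_sqrt (Z : Matrix n n 𝕜) :
    ∃ U ∈ unitaryGroup n 𝕜, Z = U * CFC.sqrt (Zᴴ * Z) := by
  apply exists_mem_unitaryGroup_eq_mul_of_conjTranspose_mul_self_eq
  have hP : (CFC.sqrt (Zᴴ * Z))ᴴ = CFC.sqrt (Zᴴ * Z) := (CFC.sqrt_nonneg _).isSelfAdjoint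
  rw [hP, CFC.sqrt_mul_sqrt_self _ (posSemidef_conjTranspose_mul_self Z).nonneg]

open Polynomial in
lemma IsHermitian.trace_cfc_eq_sum_roots {A : Matrix n n 𝕜} (hA : A.IsHermitian) (f : ℝ → ℝ) :
    (cfc f A).trace = (A.charpoly.roots.map fun z => (f (RCLike.re z) : 𝕜)).sum := by
  rw [hA.cfc_eq f, IsHermitian.cfc, Unitary.conjStarAlgAut_apply, trace_mul_cycle,
    Unitary.coe_star_mul_self, one_mul, trace_diagonal, hA.roots_charpoly_eq_eigenvalues,
    Multiset.map_map]
  simp [Function.comp_def]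

open Polynomial in
lemma trace_cfc_mul_comm (A : Matrix m n 𝕜) (B : Matrix n m 𝕜) (hAB : (A * B).IsHermitian)
    (hBA : (B * A).IsHermitian) {f : ℝ → ℝ} (hf : f 0 = 0) :
    (cfc f (A * B)).trace = (cfc f (B * A)).trace := by
  have hroots : Fintype.card n • {0} + (A * B).charpoly.roots
      = Fintype.card m • {0} + (B * A).charpoly.roots := by
    rw [← roots_X_pow, ← roots_X_pow, ← roots_mul, ← roots_mul, charpoly_mul_comm']
    all_goals exact mul_ne_zero (pow_ne_zero _ X_ne_zero) (charpoly_monic _).ne_zero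
  have := congrArg (fun s => (s.map fun z => (f (RCLike.re z) : 𝕜)).sum) hroots
  simpa [hAB.trace_cfc_eq_sum_roots, hBA.trace_cfc_eq_sum_roots, Multiset.map_nsmul,
    Multiset.sum_nsmul, hf] using this

lemma trace_sqrt_mul_conjTranspose_self (X : Matrix m n 𝕜) :
    (CFC.sqrt (X * Xᴴ)).trace = (CFC.sqrt (Xᴴ * X)).trace := by
  rw [CFC.sqrt_eq_real_sqrt _ (posSemidef_self_mul_conjTranspose X).nonneg,
    CFC.sqrt_eq_real_sqrt _ (posSemidef_conjTranspose_mul_self X).nonneg, cfcₙ_eq_cfc, cfcₙ_eq_cfc]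
  exact trace_cfc_mul_comm X Xᴴ (isHermitian_mul_conjTranspose_self X)
    (isHermitian_conjTranspose_mul_self X) Real.sqrt_zero

lemma PosSemidef.sqrt_eq_cfc_sqrt {A : Matrix n n 𝕜} (hA : A.PosSemidef) : hA.sqrt = CFC.sqrt A := by
  rw [CFC.sqrt_eq_real_sqrt A hA.nonneg, cfcₙ_eq_cfc, hA.1.cfc_eq]
  simp [IsHermitian.cfc, PosSemidef.sqrt]

end Matrix

lemma fidelity_eq_trace_sqrt {A B : Type*} [Fintype A] [Fintype B] [DecidableEq A] [DecidableEq B]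
    {ρ σ : Matrix B B ℂ} (hρ : ρ.PosSemidef) (hσ : σ.PosSemidef) {M₀ M₁ : Matrix B A ℂ}
    (h₀ : ρ = M₀ * M₀ᴴ) (h₁ : σ = M₁ * M₁ᴴ) :
    fidelity hρ hσ = (CFC.sqrt ((M₀ᴴ * M₁)ᴴ * (M₀ᴴ * M₁))).trace.re := by
  have hR : (CFC.sqrt ρ)ᴴ = CFC.sqrt ρ := (CFC.sqrt_nonneg ρ).isSelfAdjoint
  have hX : CFC.sqrt ρ * σ * CFC.sqrt ρ = (CFC.sqrt ρ * M₁) * (CFC.sqrt ρ * M₁)ᴴ := by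
    rw [conjTranspose_mul, hR, h₁]
    simp only [Matrix.mul_assoc]
  have hXX : (CFC.sqrt ρ * M₁)ᴴ * (CFC.sqrt ρ * M₁) = (M₀ᴴ * M₁)ᴴ * (M₀ᴴ * M₁) := by
    rw [conjTranspose_mul, hR, Matrix.mul_assoc, ← Matrix.mul_assoc (CFC.sqrt ρ),
      CFC.sqrt_mul_sqrt_self ρ hρ.nonneg, h₀, conjTranspose_mul, conjTranspose_conjTranspose]
    simp only [Matrix.mul_assoc]
  simp only [fidelity, PosSemidef.sqrt_eq_cfc_sqrt]
  rw [hX, trace_sqrt_mul_conjTranspose_self, hXX]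

section Bipartite

variable {R A B : Type*}

def bipartiteMatrix : (A × B → R) ≃ Matrix B A R where
  toFun ψ := of fun j i => ψ (i, j)
  invFun M k := M k.2 k.1
  left_inv _ := rfl
  right_inv _ := rfl

@[simp]
lemma bipartiteMatrix_apply (ψ : A × B → R) (j : B) (i : A) : bipartiteMatrix ψ j i = ψ (i, j) :=
  rfl

variable [Fintype A]

lemma ptrA_eq_bipartiteMatrix_mul_conjTranspose (ψ : A × B → ℂ) :
    ptrA ψ = bipartiteMatrix ψ * (bipartiteMatrix ψ)ᴴ := by
  ext j q
  simp [ptrA, mul_apply]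

lemma sum_conj_mul_eq_trace_bipartiteMatrix [Fintype B] (ψ ψ' : A × B → ℂ) :
    ∑ k, (starRingEnd ℂ) (ψ k) * ψ' k = ((bipartiteMatrix ψ)ᴴ * bipartiteMatrix ψ').trace := by
  simp [trace, mul_apply, Fintype.sum_prod_type]

end Bipartite

theorem uhlmann_exists_purification_general
    {A B : Type*} [Fintype A] [Fintype B] [DecidableEq A] [DecidableEq B]
    (φ₀ φ₁ : A × B → ℂ)
    (h₀ : ∑ k : A × B, (starRingEnd ℂ) (φ₀ k) * φ₀ k = 1) :
    ∃ φ : A × B → ℂ,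
      (∑ k : A × B, (starRingEnd ℂ) (φ k) * φ k = 1) ∧
      ptrA φ = ptrA φ₀ ∧
      ‖∑ k : A × B, (starRingEnd ℂ) (φ k) * φ₁ k‖ =
        fidelity (ptrA_posSemidef φ₀) (ptrA_posSemidef φ₁) := by
  set M₀ := bipartiteMatrix φ₀
  set M₁ := bipartiteMatrix φ₁
  obtain ⟨U, hU, hpolar⟩ := exists_mem_unitaryGroup_eq_mul_sqrt (M₀ᴴ * M₁)
  have hU_mul_star : U * Uᴴ = 1 := mem_unitaryGroup_iff.mp hU
  have hU_star_mul : Uᴴ * U = 1 := mem_unitaryGroup_iff'.mp hU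
  refine ⟨bipartiteMatrix.symm (M₀ * U), ?_, ?_, ?_⟩
  · rw [sum_conj_mul_eq_trace_bipartiteMatrix, Equiv.apply_symm_apply, conjTranspose_mul, ← Matrix.mul_assoc,
      trace_mul_comm, ← Matrix.mul_assoc, ← Matrix.mul_assoc, hU_mul_star, Matrix.one_mul,
      ← sum_conj_mul_eq_trace_bipartiteMatrix, h₀]
  · rw [ptrA_eq_bipartiteMatrix_mul_conjTranspose, ptrA_eq_bipartiteMatrix_mul_conjTranspose φ₀, Equiv.apply_symm_apply,
      conjTranspose_mul, Matrix.mul_assoc, ← Matrix.mul_assoc U, hU_mul_star, Matrix.one_mul]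
  · rw [sum_conj_mul_eq_trace_bipartiteMatrix, Equiv.apply_symm_apply, conjTranspose_mul, Matrix.mul_assoc,
      hpolar, ← Matrix.mul_assoc, hU_star_mul, Matrix.one_mul,
      fidelity_eq_trace_sqrt _ _ (ptrA_eq_bipartiteMatrix_mul_conjTranspose φ₀) (ptrA_eq_bipartiteMatrix_mul_conjTranspose φ₁)]
    exact (Complex.re_eq_norm.mpr (CFC.sqrt_nonneg _).posSemidef.trace_nonneg).symm

/-- **Uhlmann's theorem (purification form).** The fidelity of the two reduced states
is attained as the overlap of `φ₁` with some purification `φ` of `ρ₀ = ptrA φ₀`. -/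
theorem uhlmann_exists_purification
    {A B : Type*} [Fintype A] [Fintype B] [DecidableEq A] [DecidableEq B]
    (φ₀ φ₁ : A × B → ℂ)
    (h₀ : ∑ k : A × B, (starRingEnd ℂ) (φ₀ k) * φ₀ k = 1)
    (h₁ : ∑ k : A × B, (starRingEnd ℂ) (φ₁ k) * φ₁ k = 1) :
    ∃ φ : A × B → ℂ,
      (∑ k : A × B, (starRingEnd ℂ) (φ k) * φ k = 1) ∧
      ptrA φ = ptrA φ₀ ∧
      ‖∑ k : A × B, (starRingEnd ℂ) (φ k) * φ₁ k‖ =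
        fidelity (ptrA_posSemidef φ₀) (ptrA_posSemidef φ₁) :=
  uhlmann_exists_purification_general φ₀ φ₁ h₀
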